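/- Let (P_n) be strongly invariant for the system (A). The pair (A,P) is exponentially dichotomic (i.e., (h,k)-dichotomic for the rates h_m = e^{αm}, k_m = e^{βm} for some α, β > 0) if and only if there exist a sequence of norms 𝒩 = {|||·|||_n : n ∈ ℕ} compatible with (P_n) and real constants α, β > 0 such that |||A_m^n P_n x|||_m ≤ e^{−α(m−n)}|||P_n x|||_n and |||B_m^n Q_m x|||_n ≤ e^{−β(m−n)}|||Q_m x|||_m for all m ≥ n and all x ∈ X. -/

import Mathlib

open ContinuousLinearMap Filter

noncomputable section

variable {X : Type*} [NormedAddCommGroup X] [NormedSpace ℝ X]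

/-- The evolution operator `A_m^n` associated to the linear difference system
`x_{n+1} = A_n x_n`: `A_m^n = A_{m-1} ⋯ A_n` for `m > n` and `A_n^n = I`. -/
def evol (A : ℕ → X →L[ℝ] X) : ℕ → ℕ → X →L[ℝ] X
  | 0, _ => 1
  | m + 1, n => if m + 1 ≤ n then 1 else A m ∘L evol A m n

/-- `P` is a projectors sequence. -/
def ProjSeq (P : ℕ → X →L[ℝ] X) : Prop := ∀ n, P n ∘L P n = P n

/-- The projectors sequence `P` is invariant for the system `(A)`. -/
def InvariantFor (A P : ℕ → X →L[ℝ] X) : Prop := ∀ n, A n ∘L P n = P (n + 1) ∘L A n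

/-- The projectors sequence `P` is strongly invariant for the system `(A)`: it is invariant and
the restriction of `A_m^n` to `Ker P_n` is an isomorphism from `Ker P_n` onto `Ker P_m`. -/
def StronglyInvariantFor (A P : ℕ → X →L[ℝ] X) : Prop :=
  InvariantFor A P ∧ ∀ m n : ℕ, n ≤ m →
    Set.BijOn (evol A m n) (LinearMap.ker (P n : X →ₗ[ℝ] X) : Set X) (LinearMap.ker (P m : X →ₗ[ℝ] X) : Set X)

/-- A growth rate: an increasing sequence with values in `[1, ∞)` tending to `∞`. -/
def IsGrowthRate (h : ℕ → ℝ) : Prop :=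
  StrictMono h ∧ (∀ n, 1 ≤ h n) ∧ Tendsto h atTop atTop

/-- The pair `(A, P)` is `(h,k)`-dichotomic. -/
def Dichotomic (A P : ℕ → X →L[ℝ] X) (h k : ℕ → ℝ) : Prop :=
  ∃ d : ℕ → ℝ, (∀ n, 1 ≤ d n) ∧ Monotone d ∧
    ∀ m n : ℕ, n ≤ m → ∀ x : X,
      h m * ‖evol A m n (P n x)‖ ≤ d n * (h n * ‖P n x‖) ∧
      k m * ‖(1 - P n) x‖ ≤ d m * (k n * ‖evol A m n ((1 - P n) x)‖)

/-- The pair `(A, P)` is uniformly `(h,k)`-dichotomic. -/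
def UniformDichotomic (A P : ℕ → X →L[ℝ] X) (h k : ℕ → ℝ) : Prop :=
  ∃ d : ℝ, 1 ≤ d ∧
    ∀ m n : ℕ, n ≤ m → ∀ x : X,
      h m * ‖evol A m n (P n x)‖ ≤ d * (h n * ‖P n x‖) ∧
      k m * ‖(1 - P n) x‖ ≤ d * (k n * ‖evol A m n ((1 - P n) x)‖)

/-- The pair `(A, P)` has `(h,k)`-growth. -/
def HasGrowth (A P : ℕ → X →L[ℝ] X) (h k : ℕ → ℝ) : Prop :=
  ∃ g : ℕ → ℝ, (∀ n, 1 ≤ g n) ∧ Monotone g ∧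
    ∀ m n : ℕ, n ≤ m → ∀ x : X,
      h n * ‖evol A m n (P n x)‖ ≤ g n * (h m * ‖P n x‖) ∧
      k n * ‖(1 - P n) x‖ ≤ g m * (k m * ‖evol A m n ((1 - P n) x)‖)

/-- `N` is a sequence of norms on `X`. -/
def IsNormSeq (N : ℕ → X → ℝ) : Prop :=
  ∀ n, (∀ x y, N n (x + y) ≤ N n x + N n y) ∧
    (∀ (a : ℝ) (x : X), N n (a • x) = |a| * N n x) ∧
    (∀ x, N n x = 0 ↔ x = 0)

/-- The sequence of norms `N` is compatible with the projectors sequence `P`. -/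
def NormsCompatible (N : ℕ → X → ℝ) (P : ℕ → X →L[ℝ] X) : Prop :=
  IsNormSeq N ∧ ∃ c : ℕ → ℝ, (∀ n, 1 ≤ c n) ∧ Monotone c ∧
    ∀ (n : ℕ) (x : X), ‖x‖ ≤ N n x ∧ N n x ≤ c n * (‖P n x‖ + ‖(1 - P n) x‖)

/-- The defining properties of the skew-evolution operator `B` associated to the pair `(A, P)`:
`A_m^n B_m^n Q_m = Q_m`, `B_m^n A_m^n Q_n = Q_n` and `B_m^n Q_m = Q_n B_m^n Q_m` for `m ≥ n`,
where `Q_n = I - P_n`. -/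
def SkewEvol (A P : ℕ → X →L[ℝ] X) (B : ℕ → ℕ → X →L[ℝ] X) : Prop :=
  ∀ m n : ℕ, n ≤ m →
    evol A m n ∘L (B m n ∘L (1 - P m)) = 1 - P m ∧
    B m n ∘L (evol A m n ∘L (1 - P n)) = 1 - P n ∧
    B m n ∘L (1 - P m) = (1 - P n) ∘L (B m n ∘L (1 - P m))

/-!
Dichotomy gives the pointwise bounds `e^{α(m-n)}‖A_m^n P_n x‖ ≤ d_n‖P_n x‖` and
`e^{β(n-k)}‖B_n^k Q_n x‖ ≤ d_n‖Q_n x‖`, so the Lyapunov norm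
`|||x|||_n = sup_{m ≥ n} e^{α(m-n)}‖A_m^n P_n x‖ + sup_{k ≤ n} e^{β(n-k)}‖B_n^k Q_n x‖`
is finite and compatible with `P` (the terms `m = n` and `k = n` give `‖x‖ ≤ |||x|||_n`).
The cocycle identities `A_j^m A_m^n = A_j^n` and `B_n^k Q_n B_m^n Q_m = B_m^k Q_m` turn a shift of
the base point into a shift of the exponents, which is exactly the claimed contraction.
Conversely, the compatibility inequalities sandwich `‖·‖` and `|||·|||_n`, which turns the
contractions back into the dichotomy estimates with `d = c`.
-/

section OpSupSeminorm

variable {E F ι : Type*} [NormedAddCommGroup E] [NormedSpace ℝ E] [NormedAddCommGroup F]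
  [NormedSpace ℝ F]

def opSupSeminorm (T : ι → E →L[ℝ] F) : Seminorm ℝ E :=
  ⨆ i, (normSeminorm ℝ F).comp (T i : E →ₗ[ℝ] F)

variable {T : ι → E →L[ℝ] F} {C : E → ℝ}

theorem opSupSeminorm_apply (hT : ∀ i x, ‖T i x‖ ≤ C x) (x : E) :
    opSupSeminorm T x = ⨆ i, ‖T i x‖ :=
  Seminorm.iSup_apply <| Seminorm.bddAbove_range_iff.2 fun x =>
    ⟨C x, Set.forall_mem_range.2 fun i => hT i x⟩

theorem norm_apply_le_opSupSeminorm (hT : ∀ i x, ‖T i x‖ ≤ C x) (i : ι) (x : E) :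
    ‖T i x‖ ≤ opSupSeminorm T x := by
  rw [opSupSeminorm_apply hT]
  exact le_ciSup ⟨C x, Set.forall_mem_range.2 fun i => hT i x⟩ i

theorem opSupSeminorm_le [Nonempty ι] (hT : ∀ i x, ‖T i x‖ ≤ C x) {x : E} {M : ℝ}
    (h : ∀ i, ‖T i x‖ ≤ M) : opSupSeminorm T x ≤ M := by
  rw [opSupSeminorm_apply hT]
  exact ciSup_le h

end OpSupSeminorm

theorem norm_exp_smul_apply {E F : Type*} [NormedAddCommGroup E] [NormedSpace ℝ E]
    [NormedAddCommGroup F] [NormedSpace ℝ F] (a : ℝ) (T : E →L[ℝ] F) (x : E) :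
    ‖(Real.exp a • T) x‖ = Real.exp a * ‖T x‖ := by
  rw [smul_apply, norm_smul, Real.norm_of_nonneg (Real.exp_pos a).le]

section Evolution

variable {A P : ℕ → X →L[ℝ] X} {B : ℕ → ℕ → X →L[ℝ] X}

@[simp]
theorem evol_self (A : ℕ → X →L[ℝ] X) (n : ℕ) : evol A n n = 1 := by
  cases n with
  | zero => rfl
  | succ m => exact if_pos le_rfl

theorem evol_succ_of_le (A : ℕ → X →L[ℝ] X) {m n : ℕ} (h : n ≤ m) :
    evol A (m + 1) n = A m ∘L evol A m n :=
  if_neg (by omega)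

theorem evol_evol_apply (A : ℕ → X →L[ℝ] X) {n m j : ℕ} (hnm : n ≤ m) (hmj : m ≤ j)
    (x : X) :
    evol A j m (evol A m n x) = evol A j n x := by
  induction j, hmj using Nat.le_induction with
  | base => simp
  | succ j hj ih =>
    simp only [evol_succ_of_le A hj, evol_succ_of_le A (hnm.trans hj), comp_apply, ih]

theorem ProjSeq.apply_apply (hP : ProjSeq P) (n : ℕ) (x : X) : P n (P n x) = P n x :=
  congr($(hP n) x)

theorem compl_proj_apply (P : ℕ → X →L[ℝ] X) (n : ℕ) (x : X) : (1 - P n) x = x - P n x :=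
  rfl

theorem ProjSeq.apply_compl (hP : ProjSeq P) (n : ℕ) (x : X) : P n ((1 - P n) x) = 0 := by
  rw [compl_proj_apply, map_sub, hP.apply_apply, sub_self]

theorem ProjSeq.compl_apply (hP : ProjSeq P) (n : ℕ) (x : X) : (1 - P n) (P n x) = 0 := by
  rw [compl_proj_apply, hP.apply_apply, sub_self]

theorem ProjSeq.compl_apply_compl (hP : ProjSeq P) (n : ℕ) (x : X) :
    (1 - P n) ((1 - P n) x) = (1 - P n) x := by
  rw [compl_proj_apply P n ((1 - P n) x), hP.apply_compl, sub_zero]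

theorem norm_le_norm_proj_add_norm_compl (P : ℕ → X →L[ℝ] X) (n : ℕ) (x : X) :
    ‖x‖ ≤ ‖P n x‖ + ‖(1 - P n) x‖ := by
  simpa only [compl_proj_apply, add_sub_cancel] using norm_add_le (P n x) ((1 - P n) x)

theorem InvariantFor.evol_apply_proj (hI : InvariantFor A P) {n m : ℕ} (h : n ≤ m) (x : X) :
    evol A m n (P n x) = P m (evol A m n x) := by
  induction m, h using Nat.le_induction with
  | base => simp
  | succ m hm ih => simpa [evol_succ_of_le A hm, ih] using congr($(hI m) (evol A m n x))

theorem SkewEvol.evol_apply (hB : SkewEvol A P B) {m n : ℕ} (h : n ≤ m) (x : X) :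
    evol A m n (B m n ((1 - P m) x)) = (1 - P m) x :=
  congr($((hB m n h).1) x)

theorem SkewEvol.apply_evol (hB : SkewEvol A P B) {m n : ℕ} (h : n ≤ m) (x : X) :
    B m n (evol A m n ((1 - P n) x)) = (1 - P n) x :=
  congr($((hB m n h).2.1) x)

theorem SkewEvol.compl_apply (hB : SkewEvol A P B) {m n : ℕ} (h : n ≤ m) (x : X) :
    (1 - P n) (B m n ((1 - P m) x)) = B m n ((1 - P m) x) :=
  congr($((hB m n h).2.2) x).symm

theorem SkewEvol.proj_apply (hB : SkewEvol A P B) (hP : ProjSeq P) {m n : ℕ} (h : n ≤ m)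
    (x : X) : P n (B m n ((1 - P m) x)) = 0 := by
  rw [← hB.compl_apply h, hP.apply_compl]

theorem SkewEvol.apply_self (hB : SkewEvol A P B) (n : ℕ) (x : X) :
    B n n ((1 - P n) x) = (1 - P n) x := by
  simpa using hB.apply_evol le_rfl x

/-- Both sides lie in `Ker P_k` and are mapped to `Q_m x` by `A_m^k`, which is injective there. -/
theorem SkewEvol.apply_compl_apply (hB : SkewEvol A P B) (hP : ProjSeq P)
    (hSI : StronglyInvariantFor A P) {k n m : ℕ} (hkn : k ≤ n) (hnm : n ≤ m) (x : X) :
    B n k ((1 - P n) (B m n ((1 - P m) x))) = B m k ((1 - P m) x) := by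
  refine (hSI.2 m k (hkn.trans hnm)).injOn (hB.proj_apply hP hkn _)
    (hB.proj_apply hP (hkn.trans hnm) x) ?_
  rw [← evol_evol_apply A hkn hnm, hB.evol_apply hkn, hB.compl_apply hnm, hB.evol_apply hnm,
    hB.evol_apply (hkn.trans hnm)]

end Evolution

theorem exp_mul_sub_mul_le_iff (a m n p q : ℝ) :
    Real.exp (a * (m - n)) * p ≤ q ↔ Real.exp (a * m) * p ≤ Real.exp (a * n) * q := by
  rw [mul_sub, Real.exp_sub, div_mul_eq_mul_div, div_le_iff₀ (Real.exp_pos _), mul_comm q]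

theorem le_exp_neg_mul_sub_mul_iff (a m n p q : ℝ) :
    p ≤ Real.exp (-a * (m - n)) * q ↔ Real.exp (a * m) * p ≤ Real.exp (a * n) * q := by
  rw [← exp_mul_sub_mul_le_iff, neg_mul, Real.exp_neg, ← div_eq_inv_mul,
    le_div_iff₀ (Real.exp_pos _), mul_comm]

theorem isNormSeq_of_norm_le (p : ℕ → Seminorm ℝ X) (h : ∀ n x, ‖x‖ ≤ p n x) :
    IsNormSeq fun n => p n := fun n =>
  ⟨map_add_le_add (p n), fun a x => by simp only [map_smul_eq_mul, Real.norm_eq_abs],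
    fun x => ⟨fun hx => norm_le_zero_iff.1 (hx ▸ h n x), fun hx => hx ▸ map_zero (p n)⟩⟩

section Lyapunov

variable {A P : ℕ → X →L[ℝ] X} {B : ℕ → ℕ → X →L[ℝ] X} {α β : ℝ} {d : ℕ → ℝ} {m n : ℕ}

def stableFamily (A P : ℕ → X →L[ℝ] X) (α : ℝ) (n : ℕ) (m : Set.Ici n) : X →L[ℝ] X :=
  Real.exp (α * ((m : ℝ) - n)) • (evol A m n ∘L P n)

def unstableFamily (P : ℕ → X →L[ℝ] X) (B : ℕ → ℕ → X →L[ℝ] X) (β : ℝ) (n : ℕ)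
    (k : Set.Iic n) : X →L[ℝ] X :=
  Real.exp (β * ((n : ℝ) - k)) • (B n k ∘L (1 - P n))

def stableSeminorm (A P : ℕ → X →L[ℝ] X) (α : ℝ) (n : ℕ) : Seminorm ℝ X :=
  opSupSeminorm (stableFamily A P α n)

def unstableSeminorm (P : ℕ → X →L[ℝ] X) (B : ℕ → ℕ → X →L[ℝ] X) (β : ℝ)
    (n : ℕ) : Seminorm ℝ X :=
  opSupSeminorm (unstableFamily P B β n)

def lyapunovNorm (A P : ℕ → X →L[ℝ] X) (B : ℕ → ℕ → X →L[ℝ] X) (α β : ℝ)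
    (n : ℕ) : Seminorm ℝ X :=
  stableSeminorm A P α n + unstableSeminorm P B β n

theorem norm_stableFamily_apply (m : Set.Ici n) (x : X) :
    ‖stableFamily A P α n m x‖ = Real.exp (α * ((m : ℝ) - n)) * ‖evol A m n (P n x)‖ :=
  norm_exp_smul_apply _ _ x

theorem norm_unstableFamily_apply (k : Set.Iic n) (x : X) :
    ‖unstableFamily P B β n k x‖ =
      Real.exp (β * ((n : ℝ) - k)) * ‖B n k ((1 - P n) x)‖ :=
  norm_exp_smul_apply _ _ x

theorem le_stableSeminorm
    (hA : ∀ n (m : Set.Ici n) (x : X), ‖stableFamily A P α n m x‖ ≤ d n * ‖P n x‖)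
    (h : n ≤ m) (x : X) :
    Real.exp (α * ((m : ℝ) - n)) * ‖evol A m n (P n x)‖ ≤ stableSeminorm A P α n x := by
  have := norm_apply_le_opSupSeminorm (hA n) ⟨m, h⟩ x
  rwa [norm_stableFamily_apply] at this

theorem norm_proj_le_stableSeminorm
    (hA : ∀ n (m : Set.Ici n) (x : X), ‖stableFamily A P α n m x‖ ≤ d n * ‖P n x‖)
    (n : ℕ) (x : X) : ‖P n x‖ ≤ stableSeminorm A P α n x := by
  simpa only [sub_self, mul_zero, Real.exp_zero, one_mul, evol_self, one_apply_eq_self] using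
    le_stableSeminorm hA (le_refl n) x

theorem stableSeminorm_le
    (hA : ∀ n (m : Set.Ici n) (x : X), ‖stableFamily A P α n m x‖ ≤ d n * ‖P n x‖)
    (n : ℕ) (x : X) : stableSeminorm A P α n x ≤ d n * ‖P n x‖ :=
  opSupSeminorm_le (hA n) fun m => hA n m x

theorem stableSeminorm_eq_zero
    (hA : ∀ n (m : Set.Ici n) (x : X), ‖stableFamily A P α n m x‖ ≤ d n * ‖P n x‖)
    {y : X} (hy : P n y = 0) : stableSeminorm A P α n y = 0 :=
  le_antisymm (opSupSeminorm_le (hA n) fun m => by simp [norm_stableFamily_apply, hy])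
    (apply_nonneg _ _)

theorem stableSeminorm_evol_le
    (hA : ∀ n (m : Set.Ici n) (x : X), ‖stableFamily A P α n m x‖ ≤ d n * ‖P n x‖)
    (hP : ProjSeq P) (hI : InvariantFor A P) (hnm : n ≤ m) (x : X) :
    stableSeminorm A P α m (evol A m n (P n x)) ≤
      Real.exp (-α * ((m : ℝ) - n)) * stableSeminorm A P α n (P n x) := by
  refine opSupSeminorm_le (hA m) fun ⟨j, hj⟩ => ?_
  rw [norm_stableFamily_apply, ← hI.evol_apply_proj hnm, hP.apply_apply,
    evol_evol_apply A hnm hj]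
  calc Real.exp (α * ((j : ℝ) - m)) * ‖evol A j n (P n x)‖
      = Real.exp (-α * ((m : ℝ) - n)) *
          (Real.exp (α * ((j : ℝ) - n)) * ‖evol A j n (P n x)‖) := by
        rw [← mul_assoc, ← Real.exp_add]; ring_nf
    _ ≤ Real.exp (-α * ((m : ℝ) - n)) * stableSeminorm A P α n (P n x) := by
        gcongr
        simpa only [hP.apply_apply] using le_stableSeminorm hA (hnm.trans hj) (P n x)

theorem le_unstableSeminorm
    (hU : ∀ n (k : Set.Iic n) (x : X), ‖unstableFamily P B β n k x‖ ≤ d n * ‖(1 - P n) x‖)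
    {k : ℕ} (h : k ≤ n) (x : X) :
    Real.exp (β * ((n : ℝ) - k)) * ‖B n k ((1 - P n) x)‖ ≤ unstableSeminorm P B β n x := by
  have := norm_apply_le_opSupSeminorm (hU n) ⟨k, h⟩ x
  rwa [norm_unstableFamily_apply] at this

theorem norm_compl_le_unstableSeminorm
    (hU : ∀ n (k : Set.Iic n) (x : X), ‖unstableFamily P B β n k x‖ ≤ d n * ‖(1 - P n) x‖)
    (hB : SkewEvol A P B) (n : ℕ) (x : X) : ‖(1 - P n) x‖ ≤ unstableSeminorm P B β n x := by
  simpa only [sub_self, mul_zero, Real.exp_zero, one_mul, hB.apply_self] using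
    le_unstableSeminorm hU (le_refl n) x

theorem unstableSeminorm_le
    (hU : ∀ n (k : Set.Iic n) (x : X), ‖unstableFamily P B β n k x‖ ≤ d n * ‖(1 - P n) x‖)
    (n : ℕ) (x : X) : unstableSeminorm P B β n x ≤ d n * ‖(1 - P n) x‖ :=
  opSupSeminorm_le (hU n) fun k => hU n k x

theorem unstableSeminorm_eq_zero
    (hU : ∀ n (k : Set.Iic n) (x : X), ‖unstableFamily P B β n k x‖ ≤ d n * ‖(1 - P n) x‖)
    {y : X} (hy : (1 - P n) y = 0) : unstableSeminorm P B β n y = 0 :=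
  le_antisymm (opSupSeminorm_le (hU n) fun k => by simp [norm_unstableFamily_apply, hy])
    (apply_nonneg _ _)

theorem unstableSeminorm_skew_le
    (hU : ∀ n (k : Set.Iic n) (x : X), ‖unstableFamily P B β n k x‖ ≤ d n * ‖(1 - P n) x‖)
    (hP : ProjSeq P) (hSI : StronglyInvariantFor A P) (hB : SkewEvol A P B) (hnm : n ≤ m)
    (x : X) :
    unstableSeminorm P B β n (B m n ((1 - P m) x)) ≤
      Real.exp (-β * ((m : ℝ) - n)) * unstableSeminorm P B β m ((1 - P m) x) := by
  refine opSupSeminorm_le (hU n) fun ⟨k, hk⟩ => ?_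
  rw [norm_unstableFamily_apply, hB.apply_compl_apply hP hSI hk hnm]
  calc Real.exp (β * ((n : ℝ) - k)) * ‖B m k ((1 - P m) x)‖
      = Real.exp (-β * ((m : ℝ) - n)) *
          (Real.exp (β * ((m : ℝ) - k)) * ‖B m k ((1 - P m) x)‖) := by
        rw [← mul_assoc, ← Real.exp_add]; ring_nf
    _ ≤ Real.exp (-β * ((m : ℝ) - n)) * unstableSeminorm P B β m ((1 - P m) x) := by
        gcongr
        simpa only [hP.compl_apply_compl] using
          le_unstableSeminorm hU (Set.mem_Iic.1 hk |>.trans hnm) ((1 - P m) x)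

theorem normsCompatible_lyapunovNorm (hB : SkewEvol A P B)
    (hA : ∀ n (m : Set.Ici n) (x : X), ‖stableFamily A P α n m x‖ ≤ d n * ‖P n x‖)
    (hU : ∀ n (k : Set.Iic n) (x : X), ‖unstableFamily P B β n k x‖ ≤ d n * ‖(1 - P n) x‖)
    (hd1 : ∀ n, 1 ≤ d n) (hdm : Monotone d) :
    NormsCompatible (fun n => lyapunovNorm A P B α β n) P := by
  have hle (n : ℕ) (x : X) : ‖x‖ ≤ lyapunovNorm A P B α β n x :=
    (norm_le_norm_proj_add_norm_compl P n x).trans <|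
      add_le_add (norm_proj_le_stableSeminorm hA n x) (norm_compl_le_unstableSeminorm hU hB n x)
  refine ⟨isNormSeq_of_norm_le _ hle, d, hd1, hdm, fun n x => ⟨hle n x, ?_⟩⟩
  rw [mul_add]
  exact add_le_add (stableSeminorm_le hA n x) (unstableSeminorm_le hU n x)

theorem lyapunovNorm_evol_le (hP : ProjSeq P) (hI : InvariantFor A P)
    (hA : ∀ n (m : Set.Ici n) (x : X), ‖stableFamily A P α n m x‖ ≤ d n * ‖P n x‖)
    (hU : ∀ n (k : Set.Iic n) (x : X), ‖unstableFamily P B β n k x‖ ≤ d n * ‖(1 - P n) x‖)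
    (hnm : n ≤ m) (x : X) :
    lyapunovNorm A P B α β m (evol A m n (P n x)) ≤
      Real.exp (-α * ((m : ℝ) - n)) * lyapunovNorm A P B α β n (P n x) := by
  have hQ : (1 - P m) (evol A m n (P n x)) = 0 := by
    rw [hI.evol_apply_proj hnm, hP.compl_apply]
  simp only [lyapunovNorm, add_apply, unstableSeminorm_eq_zero hU hQ, add_zero, mul_add]
  exact le_add_of_le_of_nonneg (stableSeminorm_evol_le hA hP hI hnm x)
    (mul_nonneg (Real.exp_pos _).le (apply_nonneg _ _))

theorem lyapunovNorm_skew_le (hP : ProjSeq P) (hSI : StronglyInvariantFor A P)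
    (hB : SkewEvol A P B)
    (hA : ∀ n (m : Set.Ici n) (x : X), ‖stableFamily A P α n m x‖ ≤ d n * ‖P n x‖)
    (hU : ∀ n (k : Set.Iic n) (x : X), ‖unstableFamily P B β n k x‖ ≤ d n * ‖(1 - P n) x‖)
    (hnm : n ≤ m) (x : X) :
    lyapunovNorm A P B α β n (B m n ((1 - P m) x)) ≤
      Real.exp (-β * ((m : ℝ) - n)) * lyapunovNorm A P B α β m ((1 - P m) x) := by
  simp only [lyapunovNorm, add_apply, stableSeminorm_eq_zero hA (hB.proj_apply hP hnm x),
    zero_add, mul_add]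
  exact le_add_of_nonneg_of_le (mul_nonneg (Real.exp_pos _).le (apply_nonneg _ _))
    (unstableSeminorm_skew_le hU hP hSI hB hnm x)

theorem Dichotomic.exists_bounds_family
    (hd : Dichotomic A P (fun m => Real.exp (α * m)) (fun m => Real.exp (β * m)))
    (hB : SkewEvol A P B) :
    ∃ d : ℕ → ℝ, (∀ n, 1 ≤ d n) ∧ Monotone d ∧
      (∀ n (m : Set.Ici n) (x : X), ‖stableFamily A P α n m x‖ ≤ d n * ‖P n x‖) ∧
      (∀ n (k : Set.Iic n) (x : X), ‖unstableFamily P B β n k x‖ ≤ d n * ‖(1 - P n) x‖) := by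
  obtain ⟨d, hd1, hdm, hdich⟩ := hd
  refine ⟨d, hd1, hdm, fun n ⟨m, h⟩ x => ?_, fun n ⟨k, h⟩ x => ?_⟩
  · rw [norm_stableFamily_apply]
    exact (exp_mul_sub_mul_le_iff ..).2 <| (hdich m n h x).1.trans_eq (mul_left_comm _ _ _)
  · have key := (hdich n k h (B n k ((1 - P n) x))).2
    rw [hB.compl_apply h, hB.evol_apply h] at key
    rw [norm_unstableFamily_apply]
    exact (exp_mul_sub_mul_le_iff ..).2 <| key.trans_eq (mul_left_comm _ _ _)

end Lyapunov

theorem Dichotomic.of_normsCompatible {A P : ℕ → X →L[ℝ] X} {B : ℕ → ℕ → X →L[ℝ] X}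
    {α β : ℝ} {N : ℕ → X → ℝ} (hP : ProjSeq P) (hI : InvariantFor A P) (hB : SkewEvol A P B)
    (hN : NormsCompatible N P)
    (hdec : ∀ m n : ℕ, n ≤ m → ∀ x : X,
      N m (evol A m n (P n x)) ≤ Real.exp (-α * ((m : ℝ) - n)) * N n (P n x) ∧
      N n (B m n ((1 - P m) x)) ≤ Real.exp (-β * ((m : ℝ) - n)) * N m ((1 - P m) x)) :
    Dichotomic A P (fun m => Real.exp (α * m)) (fun m => Real.exp (β * m)) := by
  obtain ⟨-, c, hc1, hcm, hNc⟩ := hN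
  refine ⟨c, hc1, hcm, fun m n h x => ⟨?_, ?_⟩⟩
  · rw [mul_left_comm (c n)]
    refine (le_exp_neg_mul_sub_mul_iff ..).1 ?_
    calc ‖evol A m n (P n x)‖ ≤ N m (evol A m n (P n x)) := (hNc m _).1
      _ ≤ Real.exp (-α * ((m : ℝ) - n)) * N n (P n x) := (hdec m n h x).1
      _ ≤ Real.exp (-α * ((m : ℝ) - n)) * (c n * ‖P n x‖) := by
          gcongr
          simpa only [hP.apply_apply, hP.compl_apply, norm_zero, add_zero] using (hNc n (P n x)).2
  · set y := evol A m n ((1 - P n) x)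
    have hPy : P m y = 0 := by rw [← hI.evol_apply_proj h, hP.apply_compl, map_zero]
    have hQy : (1 - P m) y = y := by rw [compl_proj_apply, hPy, sub_zero]
    rw [mul_left_comm (c m)]
    refine (le_exp_neg_mul_sub_mul_iff ..).1 ?_
    calc ‖(1 - P n) x‖ ≤ N n ((1 - P n) x) := (hNc n _).1
      _ = N n (B m n ((1 - P m) y)) := by rw [hQy, hB.apply_evol h]
      _ ≤ Real.exp (-β * ((m : ℝ) - n)) * N m ((1 - P m) y) := (hdec m n h y).2
      _ ≤ Real.exp (-β * ((m : ℝ) - n)) * (c m * ‖y‖) := by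
          gcongr
          simpa only [hQy, hPy, norm_zero, zero_add] using (hNc m y).2

theorem stmt_7_general (A P : ℕ → X →L[ℝ] X) (B : ℕ → ℕ → X →L[ℝ] X)
    (hP : ProjSeq P) (hSI : StronglyInvariantFor A P) (hB : SkewEvol A P B) :
    (∃ α β : ℝ, 0 < α ∧ 0 < β ∧
      Dichotomic A P (fun m => Real.exp (α * m)) (fun m => Real.exp (β * m))) ↔
      ∃ N : ℕ → X → ℝ, NormsCompatible N P ∧ ∃ α β : ℝ, 0 < α ∧ 0 < β ∧
        ∀ m n : ℕ, n ≤ m → ∀ x : X,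
          N m (evol A m n (P n x)) ≤ Real.exp (-α * ((m : ℝ) - n)) * N n (P n x) ∧
          N n (B m n ((1 - P m) x)) ≤ Real.exp (-β * ((m : ℝ) - n)) * N m ((1 - P m) x) := by
  constructor
  · rintro ⟨α, β, hα, hβ, hd⟩
    obtain ⟨d, hd1, hdm, hA, hU⟩ := hd.exists_bounds_family hB
    exact ⟨fun n => lyapunovNorm A P B α β n, normsCompatible_lyapunovNorm hB hA hU hd1 hdm,
      α, β, hα, hβ, fun m n h x =>
        ⟨lyapunovNorm_evol_le hP hSI.1 hA hU h x, lyapunovNorm_skew_le hP hSI hB hA hU h x⟩⟩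
  · rintro ⟨N, hN, α, β, hα, hβ, hdec⟩
    exact ⟨α, β, hα, hβ, .of_normsCompatible hP hSI.1 hB hN hdec⟩

theorem stmt_7 [CompleteSpace X] (A P : ℕ → X →L[ℝ] X) (B : ℕ → ℕ → X →L[ℝ] X)
    (hP : ProjSeq P) (hSI : StronglyInvariantFor A P) (hB : SkewEvol A P B) :
    (∃ α β : ℝ, 0 < α ∧ 0 < β ∧
      Dichotomic A P (fun m => Real.exp (α * m)) (fun m => Real.exp (β * m))) ↔
      ∃ N : ℕ → X → ℝ, NormsCompatible N P ∧ ∃ α β : ℝ, 0 < α ∧ 0 < β ∧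
        ∀ m n : ℕ, n ≤ m → ∀ x : X,
          N m (evol A m n (P n x)) ≤ Real.exp (-α * ((m : ℝ) - n)) * N n (P n x) ∧
          N n (B m n ((1 - P m) x)) ≤ Real.exp (-β * ((m : ℝ) - n)) * N m ((1 - P m) x) :=
  stmt_7_general A P B hP hSI hB

end
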